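/- Let 𝒰 ⊆ ℝ^n be a closed convex set, Φ : 𝒰 → ℝ differentiable and strictly convex, and let ℓ : 𝒰 → ℝ be differentiable and L-smooth relative to Φ for some L > 0. Fix u ∈ 𝒰 and suppose u⁺ ∈ 𝒰 is a minimizer over 𝒰 of the map v ↦ (1/L)·⟨∇ℓ(u), v⟩ + D_Φ(v, u). Then ℓ(u⁺) ≤ ℓ(u). -/
import Mathlib

open scoped RealInnerProductSpace

noncomputable section

/-- The Bregman divergence `D_Φ(u, v) = Φ(u) − Φ(v) − ⟨∇Φ(v), u − v⟩` of a function
`Φ` on a Euclidean space. -/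
def bregOf {n : ℕ} (Φ : EuclideanSpace ℝ (Fin n) → ℝ) (u v : EuclideanSpace ℝ (Fin n)) : ℝ :=
  Φ u - Φ v - ⟪gradient Φ v, u - v⟫

/-- Lemma B.1, descent lemma for mirror descent: if `𝒰 ⊆ ℝⁿ` is closed
and convex, `Φ` is differentiable and strictly convex on `𝒰`, `ℓ` is differentiable and
`L`-smooth relative to `Φ` on `𝒰`, and `u⁺` minimizes `v ↦ (1/L)⟨∇ℓ(u), v⟩ + D_Φ(v, u)`
over `𝒰`, then `ℓ(u⁺) ≤ ℓ(u)`. -/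
theorem descent_lemma_mirror_descent
    {n : ℕ} (𝒰 : Set (EuclideanSpace ℝ (Fin n)))
    (hclosed : IsClosed 𝒰) (hconv : Convex ℝ 𝒰)
    (Φ ℓ : EuclideanSpace ℝ (Fin n) → ℝ)
    (hΦdiff : ∀ x ∈ 𝒰, DifferentiableAt ℝ Φ x)
    (hΦstrict : StrictConvexOn ℝ 𝒰 Φ)
    (hℓdiff : ∀ x ∈ 𝒰, DifferentiableAt ℝ ℓ x)
    (L : ℝ) (hL : 0 < L)
    (hsmooth : ∀ u ∈ 𝒰, ∀ v ∈ 𝒰,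
      -(L * bregOf Φ v u) ≤ ℓ v - ℓ u - ⟪gradient ℓ u, v - u⟫ ∧
      ℓ v - ℓ u - ⟪gradient ℓ u, v - u⟫ ≤ L * bregOf Φ v u)
    (u uplus : EuclideanSpace ℝ (Fin n)) (hu : u ∈ 𝒰) (huplus : uplus ∈ 𝒰)
    (hmin : IsMinOn (fun v => (1 / L) * ⟪gradient ℓ u, v⟫ + bregOf Φ v u) 𝒰 uplus) :
    ℓ uplus ≤ ℓ u := by
  have h1 := hmin hu
  simp only [Set.mem_setOf_eq] at h1
  have hDuu : bregOf Φ u u = 0 := by simp [bregOf]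
  have h2 : (1 / L) * ⟪gradient ℓ u, uplus⟫ + bregOf Φ uplus u ≤
      (1 / L) * ⟪gradient ℓ u, u⟫ := by
    simpa [hDuu] using h1
  have h3 : ⟪gradient ℓ u, uplus - u⟫ + L * bregOf Φ uplus u ≤ 0 := by
    have h5 := mul_le_mul_of_nonneg_left h2 hL.le
    rw [inner_sub_right]
    have hL0 : L ≠ 0 := hL.ne'
    rw [mul_add, ← mul_assoc, ← mul_assoc, mul_one_div_cancel hL0, one_mul, one_mul] at h5
    linarith
  have h4 := (hsmooth u hu uplus huplus).2
  linarith
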